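/- For nonzero rationals a and b and k ≥ 1, the graded Q-algebras Q[h,v]/(hv, h^{2k+1}, h^{2k} − a v^2) and Q[h,v]/(hv, h^{2k+1}, h^{2k} − b v^2) (deg h = 2, deg v = 2k) are isomorphic if and only if a/b is a square in Q. -/

import Mathlib

/-!
In degree `2k` the algebra `R_a` has basis `h^k, v`, and since `h^k v = 0`, `h^{2k} = a v²` and
`v² ≠ 0`, multiplication of two degree-`2k` classes is the binary form `⟨a, 1⟩` with values in the
line `ℚ v²`. A graded isomorphism `R_a ≃ R_b` is linear in degree `2k` and sends `v²` to `t v²` with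
`t ≠ 0`, so it carries `⟨b, 1⟩` to `t ⟨a, 1⟩`; comparing determinants gives `a t² = b d²`, where
`d` is the determinant of the transformation. Conversely, if `b = a c²` then `v ↦ c v` induces a
graded isomorphism `R_a ≃ R_b`.
-/

open MvPolynomial

/-- The rational cohomology algebra of a `2k`-dimensional `a`-twisted quadric:
`R_a = ℚ[h,v]/(hv, h^{2k+1}, h^{2k} − a v²)`, `h = X 0`, `v = X 1`. -/
noncomputable def twistedQuadricIdealQ (k : ℕ) (a : ℚ) : Ideal (MvPolynomial (Fin 2) ℚ) :=
  Ideal.span {X 0 * X 1, X 0 ^ (2 * k + 1), X 0 ^ (2 * k) - C a * X 1 ^ 2}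

/-- The degree-`j` graded piece of `R_a` for the grading `deg h = 2`, `deg v = 2k`. -/
noncomputable def twistedQuadricPieceQ (k : ℕ) (a : ℚ) (j : ℕ) :
    Submodule ℚ (MvPolynomial (Fin 2) ℚ ⧸ twistedQuadricIdealQ k a) :=
  Submodule.map (Ideal.Quotient.mkₐ ℚ (twistedQuadricIdealQ k a)).toLinearMap
    (weightedHomogeneousSubmodule ℚ ![2, 2 * k] j)

theorem isSquare_div_of_map_mem_span_pair {K A B : Type*} [Field K] [CommRing A] [Algebra K A]
    [CommRing B] [Algebra K B] {a b : K} {x y : A} {x' y' : B} (f : A →ₐ[K] B)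
    (hxy : x * y = 0) (hx : x ^ 2 = a • y ^ 2) (hxy' : x' * y' = 0) (hx' : x' ^ 2 = b • y' ^ 2)
    (hy' : y' ^ 2 ≠ 0) (hfy : f (y ^ 2) ≠ 0) (hfx_mem : f x ∈ Submodule.span K {x', y'})
    (hfy_mem : f y ∈ Submodule.span K {x', y'}) : IsSquare (a / b) := by
  obtain ⟨γ, δ, hfx⟩ := Submodule.mem_span_pair.mp hfx_mem
  obtain ⟨α, β, hfy'⟩ := Submodule.mem_span_pair.mp hfy_mem
  have hform : ∀ p q r s : K,
      (p • x' + q • y') * (r • x' + s • y') = (p * r * b + q * s) • y' ^ 2 := by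
    intro p q r s
    simp only [add_mul, mul_add, smul_mul_smul, ← sq, mul_comm y' x', hxy', hx', smul_zero,
      smul_smul, add_smul]
    abel
  have hy2 : f (y ^ 2) = (α * α * b + β * β) • y' ^ 2 := by
    rw [map_pow, ← hfy', sq, hform]
  have hxy2 : f (x * y) = (γ * α * b + δ * β) • y' ^ 2 := by
    rw [map_mul, ← hfx, ← hfy', hform]
  have hx2 : f (x ^ 2) = (γ * γ * b + δ * δ) • y' ^ 2 := by
    rw [map_pow, ← hfx, sq, hform]
  have ht : α * α * b + β * β ≠ 0 := fun h => hfy (by rw [hy2, h, zero_smul])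
  have horth : γ * α * b + δ * β = 0 := by
    simpa [hxy, hy'] using hxy2.symm
  have hdiag : γ * γ * b + δ * δ = a * (α * α * b + β * β) := by
    refine smul_left_injective K hy' ?_
    simp only [← hx2, hx, map_smul, hy2, smul_smul]
  rcases eq_or_ne b 0 with rfl | hb
  · exact ⟨0, by simp⟩
  -- Comparing Gram determinants: `a t² = b (αδ - βγ)²` with `t = α²b + β²`.
  refine ⟨(α * δ - β * γ) / (α * α * b + β * β), ?_⟩
  rw [div_mul_div_comm, div_eq_div_iff hb (mul_ne_zero ht ht)]
  linear_combination (α * γ * b + β * δ) * horth - (α * α * b + β * β) * hdiag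

namespace MvPolynomial

variable {σ R M : Type*} [CommSemiring R] [AddCommMonoid M]

theorem IsWeightedHomogeneous.aeval {w : σ → M} {g : σ → MvPolynomial σ R}
    (hg : ∀ i, (g i).IsWeightedHomogeneous w (w i)) {m : M} {p : MvPolynomial σ R}
    (hp : p.IsWeightedHomogeneous w m) : (aeval g p).IsWeightedHomogeneous w m := by
  induction hp using IsWeightedHomogeneous.induction_on with
  | zero => simpa using isWeightedHomogeneous_zero R w m
  | add p q _ _ hp hq => simpa using hp.add hq
  | monomial d r hd =>
    rw [aeval_monomial, ← hd, Finsupp.weight_apply, algebraMap_eq]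
    exact (IsWeightedHomogeneous.prod _ _ _ fun i _ => (hg i).pow (d i)).C_mul r

noncomputable def diagScale (u : σ → R) : MvPolynomial σ R →ₐ[R] MvPolynomial σ R :=
  aeval fun i => C (u i) * X i

@[simp] theorem diagScale_X (u : σ → R) (i : σ) : diagScale u (X i) = C (u i) * X i :=
  aeval_X _ _

theorem diagScale_comp (u v : σ → R) : (diagScale u).comp (diagScale v) = diagScale (u * v) := by
  ext i
  simp [mul_comm, mul_left_comm]

@[simp] theorem diagScale_one : diagScale (1 : σ → R) = AlgHom.id R _ := by
  ext i
  simp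

theorem IsWeightedHomogeneous.diagScale {w : σ → M} {m : M} {p : MvPolynomial σ R}
    (hp : p.IsWeightedHomogeneous w m) (u : σ → R) :
    (diagScale u p).IsWeightedHomogeneous w m :=
  hp.aeval fun i => (isWeightedHomogeneous_X R w i).C_mul (u i)

noncomputable def diagScaleEquiv (u : σ → Rˣ) : MvPolynomial σ R ≃ₐ[R] MvPolynomial σ R :=
  AlgEquiv.ofAlgHom (diagScale fun i => (u i : R)) (diagScale fun i => (↑(u i)⁻¹ : R))
    (by rw [diagScale_comp]; convert diagScale_one; ext; simp)
    (by rw [diagScale_comp]; convert diagScale_one; ext; simp)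

@[simp] theorem diagScaleEquiv_apply (u : σ → Rˣ) (p : MvPolynomial σ R) :
    diagScaleEquiv u p = diagScale (fun i => (u i : R)) p := rfl

theorem map_diagScaleEquiv_weightedHomogeneousSubmodule (u : σ → Rˣ) (w : σ → M) (m : M) :
    (weightedHomogeneousSubmodule R w m).map (diagScaleEquiv u).toLinearMap =
      weightedHomogeneousSubmodule R w m := by
  refine le_antisymm ?_ fun p hp => ⟨(diagScaleEquiv u).symm p, ?_, by simp⟩
  · rintro _ ⟨p, hp, rfl⟩
    exact IsWeightedHomogeneous.diagScale hp _
  · exact IsWeightedHomogeneous.diagScale hp _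

end MvPolynomial

theorem eq_single_of_weight_eq {k : ℕ} (hk : 1 ≤ k) {d : Fin 2 →₀ ℕ}
    (hd : Finsupp.weight ![2, 2 * k] d = 2 * k) :
    d = Finsupp.single 0 k ∨ d = Finsupp.single 1 1 := by
  simp only [Finsupp.weight_apply, Finsupp.sum_fintype, Fin.sum_univ_two, smul_eq_mul,
    Matrix.cons_val_zero, Matrix.cons_val_one, zero_mul, implies_true] at hd
  simp only [Finsupp.ext_iff, Fin.forall_fin_two, Finsupp.single_eq_same,
    Finsupp.single_eq_of_ne zero_ne_one, Finsupp.single_eq_of_ne one_ne_zero]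
  have hd1 : d 1 ≤ 1 := by nlinarith
  interval_cases d 1 <;> omega

theorem weightedHomogeneousSubmodule_two_mul_le_span {R : Type*} [CommSemiring R] {k : ℕ}
    (hk : 1 ≤ k) :
    weightedHomogeneousSubmodule R ![2, 2 * k] (2 * k) ≤
      Submodule.span R {(X 0 ^ k : MvPolynomial (Fin 2) R), X 1} := by
  intro p hp
  induction hp using IsWeightedHomogeneous.induction_on with
  | zero => exact Submodule.zero_mem _
  | add p q _ _ hp hq => exact Submodule.add_mem _ hp hq
  | monomial d r hd =>
    rcases eq_single_of_weight_eq hk hd with rfl | rfl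
    · rw [← C_mul_X_pow_eq_monomial, ← smul_eq_C_mul]
      exact Submodule.smul_mem _ _ (Submodule.subset_span (Set.mem_insert _ _))
    · rw [← C_mul_X_pow_eq_monomial, pow_one, ← smul_eq_C_mul]
      exact Submodule.smul_mem _ _ (Submodule.subset_span (Set.mem_insert_of_mem _ rfl))

theorem coeff_add_mul_coeff_eq_zero_of_mem_twistedQuadricIdealQ {k : ℕ} (hk : 1 ≤ k) {a : ℚ}
    {p : MvPolynomial (Fin 2) ℚ} (hp : p ∈ twistedQuadricIdealQ k a) :
    coeff (Finsupp.single 1 2) p + a * coeff (Finsupp.single 0 (2 * k)) p = 0 := by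
  obtain ⟨q₁, p', hp', rfl⟩ := Ideal.mem_span_insert.mp hp
  obtain ⟨q₂, q₃, rfl⟩ := Ideal.mem_span_pair.mp hp'
  rw [X_pow_eq_monomial, X_pow_eq_monomial, C_mul_X_pow_eq_monomial, X, X, monomial_mul, one_mul]
  simp [coeff_mul_monomial', Finsupp.le_def, Fin.forall_fin_two, mul_sub, Finsupp.single_apply,
    Nat.one_le_iff_ne_zero.mp hk, mul_comm]

section Quotient

variable {k : ℕ} (a : ℚ)

theorem mk_X_one_sq_ne_zero (hk : 1 ≤ k) :
    Ideal.Quotient.mkₐ ℚ (twistedQuadricIdealQ k a) (X 1) ^ 2 ≠ 0 := by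
  rw [← map_pow, Ne, Ideal.Quotient.mkₐ_eq_mk, Ideal.Quotient.eq_zero_iff_mem]
  intro h
  have := coeff_add_mul_coeff_eq_zero_of_mem_twistedQuadricIdealQ hk h
  simp only [coeff_X_pow, Finsupp.single_eq_single_iff] at this
  simp at this

theorem mk_X_zero_pow_mul_mk_X_one (hk : 1 ≤ k) :
    Ideal.Quotient.mkₐ ℚ (twistedQuadricIdealQ k a) (X 0 ^ k) *
      Ideal.Quotient.mkₐ ℚ (twistedQuadricIdealQ k a) (X 1) = 0 := by
  rw [← map_mul, Ideal.Quotient.mkₐ_eq_mk, Ideal.Quotient.eq_zero_iff_mem,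
    ← Nat.sub_add_cancel hk, pow_succ, mul_assoc]
  exact Ideal.mul_mem_left _ _ (Ideal.subset_span (Set.mem_insert _ _))

theorem mk_X_zero_pow_sq :
    Ideal.Quotient.mkₐ ℚ (twistedQuadricIdealQ k a) (X 0 ^ k) ^ 2 =
      a • Ideal.Quotient.mkₐ ℚ (twistedQuadricIdealQ k a) (X 1) ^ 2 := by
  rw [← map_pow, ← map_pow, ← map_smul, Ideal.Quotient.mkₐ_eq_mk,
    Ideal.Quotient.mk_eq_mk_iff_sub_mem, ← pow_mul, mul_comm k, smul_eq_C_mul]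
  exact Ideal.subset_span (by simp)

theorem mk_X_zero_pow_mem_twistedQuadricPieceQ :
    Ideal.Quotient.mkₐ ℚ (twistedQuadricIdealQ k a) (X 0 ^ k) ∈
      twistedQuadricPieceQ k a (2 * k) := by
  refine ⟨X 0 ^ k, ?_, rfl⟩
  simpa [mul_comm] using (isWeightedHomogeneous_X ℚ ![2, 2 * k] 0).pow k

theorem mk_X_one_mem_twistedQuadricPieceQ :
    Ideal.Quotient.mkₐ ℚ (twistedQuadricIdealQ k a) (X 1) ∈ twistedQuadricPieceQ k a (2 * k) :=
  ⟨X 1, isWeightedHomogeneous_X ℚ ![2, 2 * k] 1, rfl⟩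

theorem twistedQuadricPieceQ_two_mul_le_span (hk : 1 ≤ k) :
    twistedQuadricPieceQ k a (2 * k) ≤ Submodule.span ℚ
      {Ideal.Quotient.mkₐ ℚ (twistedQuadricIdealQ k a) (X 0 ^ k),
        Ideal.Quotient.mkₐ ℚ (twistedQuadricIdealQ k a) (X 1)} := by
  refine (Submodule.map_mono (weightedHomogeneousSubmodule_two_mul_le_span hk)).trans ?_
  simp [Submodule.map_span, Set.image_insert_eq]

end Quotient

theorem twistedQuadricIdealQ_map_diagScaleEquiv (k : ℕ) (a : ℚ) (c : ℚˣ) :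
    (twistedQuadricIdealQ k a).map (diagScaleEquiv ![1, c] : MvPolynomial (Fin 2) ℚ →+* _) =
      twistedQuadricIdealQ k (a * c ^ 2) := by
  set e := diagScaleEquiv ![1, c]
  have hX₀ : e (X 0) = X 0 := by simp [e]
  have hX₁ : e (X 1) = C (c : ℚ) * X 1 := by simp [e]
  have hv : e (X 0 * X 1) = C (c : ℚ) * (X 0 * X 1) := by
    rw [map_mul, hX₀, hX₁, mul_left_comm]
  have hh : e (X 0 ^ (2 * k + 1)) = X 0 ^ (2 * k + 1) := by rw [map_pow, hX₀]
  have hq : e (X 0 ^ (2 * k) - C a * X 1 ^ 2) = X 0 ^ (2 * k) - C (a * c ^ 2) * X 1 ^ 2 := by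
    rw [map_sub, map_mul, map_pow, map_pow, hX₀, hX₁, show e (C a) = C a from e.commutes a, C_mul,
      C_pow]
    ring
  simp only [twistedQuadricIdealQ, Ideal.map_span, Set.image_insert_eq, Set.image_singleton,
    RingHom.coe_coe]
  rw [hv, hh, hq, Ideal.span_insert, Ideal.span_singleton_mul_left_unit (c.isUnit.map C),
    ← Ideal.span_insert]

theorem exists_gradedEquiv_twistedQuadric_mul_sq (k : ℕ) (a : ℚ) (c : ℚˣ) :
    ∃ e : (MvPolynomial (Fin 2) ℚ ⧸ twistedQuadricIdealQ k a)
        ≃ₐ[ℚ] (MvPolynomial (Fin 2) ℚ ⧸ twistedQuadricIdealQ k (a * c ^ 2)),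
      ∀ j : ℕ, (twistedQuadricPieceQ k a j).map e.toLinearMap =
        twistedQuadricPieceQ k (a * c ^ 2) j := by
  let e := Ideal.quotientEquivAlg _ _ (diagScaleEquiv ![1, c])
    (twistedQuadricIdealQ_map_diagScaleEquiv k a c).symm
  refine ⟨e, fun j => ?_⟩
  have hcomm : e.toLinearMap ∘ₗ (Ideal.Quotient.mkₐ ℚ (twistedQuadricIdealQ k a)).toLinearMap =
      (Ideal.Quotient.mkₐ ℚ _).toLinearMap ∘ₗ (diagScaleEquiv ![1, c]).toLinearMap :=
    LinearMap.ext fun _ => rfl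
  rw [twistedQuadricPieceQ, twistedQuadricPieceQ, ← Submodule.map_comp, hcomm, Submodule.map_comp,
    map_diagScaleEquiv_weightedHomogeneousSubmodule]

theorem isSquare_div_of_gradedEquiv_twistedQuadric {k : ℕ} (hk : 1 ≤ k) {a b : ℚ}
    (e : (MvPolynomial (Fin 2) ℚ ⧸ twistedQuadricIdealQ k a)
        ≃ₐ[ℚ] (MvPolynomial (Fin 2) ℚ ⧸ twistedQuadricIdealQ k b))
    (he : (twistedQuadricPieceQ k a (2 * k)).map e.toLinearMap =
      twistedQuadricPieceQ k b (2 * k)) :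
    IsSquare (a / b) := by
  have hmem : ∀ z ∈ twistedQuadricPieceQ k a (2 * k), e z ∈ Submodule.span ℚ
      {Ideal.Quotient.mkₐ ℚ (twistedQuadricIdealQ k b) (X 0 ^ k),
        Ideal.Quotient.mkₐ ℚ (twistedQuadricIdealQ k b) (X 1)} := fun z hz =>
    twistedQuadricPieceQ_two_mul_le_span b hk (he ▸ Submodule.mem_map_of_mem hz)
  exact isSquare_div_of_map_mem_span_pair e.toAlgHom (mk_X_zero_pow_mul_mk_X_one a hk)
    (mk_X_zero_pow_sq a) (mk_X_zero_pow_mul_mk_X_one b hk) (mk_X_zero_pow_sq b)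
    (mk_X_one_sq_ne_zero b hk) ((map_ne_zero_iff _ e.injective).mpr (mk_X_one_sq_ne_zero a hk))
    (hmem _ (mk_X_zero_pow_mem_twistedQuadricPieceQ a))
    (hmem _ (mk_X_one_mem_twistedQuadricPieceQ a))

/-- For nonzero rationals `a, b` and `k ≥ 1`, the graded ℚ-algebras
`ℚ[h,v]/(hv, h^{2k+1}, h^{2k} − a v²)` and `ℚ[h,v]/(hv, h^{2k+1}, h^{2k} − b v²)`
(`deg h = 2`, `deg v = 2k`) are isomorphic if and only if `a/b` is a square in ℚ. -/
theorem twisted_quadrics_iso_iff_square (k : ℕ) (hk : 1 ≤ k) (a b : ℚ)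
    (ha : a ≠ 0) (hb : b ≠ 0) :
    (∃ e : (MvPolynomial (Fin 2) ℚ ⧸ twistedQuadricIdealQ k a)
        ≃ₐ[ℚ] (MvPolynomial (Fin 2) ℚ ⧸ twistedQuadricIdealQ k b),
      ∀ j : ℕ, (twistedQuadricPieceQ k a j).map e.toLinearMap = twistedQuadricPieceQ k b j)
    ↔ IsSquare (a / b) := by
  refine ⟨fun ⟨e, he⟩ => isSquare_div_of_gradedEquiv_twistedQuadric hk e (he (2 * k)), ?_⟩
  rintro ⟨r, hr⟩
  have hr0 : r ≠ 0 := by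
    rintro rfl
    exact div_ne_zero ha hb (by simpa using hr)
  have hb_eq : b = a * ((Units.mk0 r hr0)⁻¹ : ℚˣ) ^ 2 := by
    rw [div_eq_iff hb] at hr
    rw [Units.val_inv_eq_inv_val, Units.val_mk0]
    field_simp
    linear_combination -hr
  exact hb_eq ▸ exists_gradedEquiv_twistedQuadric_mul_sq k a _
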